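/- arXiv:2504.13939 — 8 statements merged into one kernel-verified Lean document; each statement's English description precedes it below -/
import Mathlib

section
/- Every finite potential game has at least one pure Nash equilibrium; specifically, any pure profile s* that maximizes the potential function Φ over all pure profiles is a pure Nash equilibrium. -/
/-- Every finite potential game has at least one pure Nash equilibrium;
specifically, any pure profile that maximizes the potential function Φ over
all pure profiles is a pure Nash equilibrium. -/
theorem potential_game_pure_nash
    {ι : Type} [Fintype ι] [Nonempty ι] [DecidableEq ι]
    (S : ι → Type) [∀ i, Fintype (S i)] [∀ i, Nonempty (S i)]
    (u : ι → (∀ j, S j) → ℝ) (Φ : (∀ j, S j) → ℝ)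
    (hpot : ∀ (i : ι) (s : ∀ j, S j) (a : S i),
      Φ s - Φ (Function.update s i a) = u i s - u i (Function.update s i a)) :
    (∀ s : ∀ j, S j, (∀ t : ∀ j, S j, Φ t ≤ Φ s) →
      ∀ (i : ι) (a : S i), u i (Function.update s i a) ≤ u i s) ∧
    ∃ s : ∀ j, S j, ∀ (i : ι) (a : S i), u i (Function.update s i a) ≤ u i s := by
  have key : ∀ s : ∀ j, S j, (∀ t : ∀ j, S j, Φ t ≤ Φ s) →
      ∀ (i : ι) (a : S i), u i (Function.update s i a) ≤ u i s := by
    intro s hmax i a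
    have h := hpot i s a
    have h2 := hmax (Function.update s i a)
    linarith
  refine ⟨key, ?_⟩
  obtain ⟨s, -, hs⟩ := Finset.exists_max_image Finset.univ Φ ⟨Classical.arbitrary _, Finset.mem_univ _⟩
  exact ⟨s, key s (fun t => hs t (Finset.mem_univ _))⟩
end

section
/- In any finite potential game, best-response (improvement) dynamics always converge to a pure Nash equilibrium: there is no infinite sequence of pure profiles s⁰, s¹, s², … in which each profile s^{k+1} differs from s^k in exactly one player i's strategy and u i (s^{k+1}) > u i (s^k); consequently every maximal improvement path terminates at a pure Nash equilibrium. -/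
/-- In any finite potential game, best-response (improvement) dynamics always
converge to a pure Nash equilibrium: there is no infinite sequence of pure
profiles in which each profile differs from the previous one in exactly one
player's strategy and strictly improves that player's payoff; consequently
every maximal improvement path terminates at a pure Nash equilibrium (a
profile admitting no single-player improving deviation is a pure Nash
equilibrium). -/
theorem potential_game_best_response_converges
    {ι : Type} [Fintype ι] [Nonempty ι] [DecidableEq ι]
    (S : ι → Type) [∀ i, Fintype (S i)] [∀ i, Nonempty (S i)]
    (u : ι → (∀ j, S j) → ℝ) (Φ : (∀ j, S j) → ℝ)
    (hpot : ∀ (i : ι) (s : ∀ j, S j) (a : S i),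
      Φ s - Φ (Function.update s i a) = u i s - u i (Function.update s i a)) :
    (¬ ∃ s : ℕ → ∀ j, S j, ∀ k : ℕ, ∃ i : ι,
        (∀ j, j ≠ i → s (k + 1) j = s k j) ∧ s (k + 1) i ≠ s k i ∧
        u i (s k) < u i (s (k + 1))) ∧
    (∀ s : ∀ j, S j, (¬ ∃ (i : ι) (a : S i), u i s < u i (Function.update s i a)) →
      ∀ (i : ι) (a : S i), u i (Function.update s i a) ≤ u i s) := by
  constructor
  · rintro ⟨s, hs⟩
    have hmono : StrictMono (fun k => Φ (s k)) := by
      apply strictMono_nat_of_lt_succ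
      intro k
      obtain ⟨i, hji, hne, hu⟩ := hs k
      have heq : s (k + 1) = Function.update (s k) i (s (k + 1) i) := by
        funext j
        by_cases hj : j = i
        · subst hj; simp [Function.update]
        · simp [Function.update, hj, hji j hj]
      have := hpot i (s k) (s (k + 1) i)
      rw [← heq] at this
      linarith
    have hinj : Function.Injective s := fun a b hab => hmono.injective (by simp [hab])
    exact (Finite.of_injective s hinj).not_infinite (by infer_instance)
  · intro s h i a
    push_neg at h
    exact h i a
end

section
/- Rosenthal's Theorem: every congestion game is an (exact) potential game. Concretely, for a congestion game with resources R, load x_r(s) = #{players i : r ∈ s_i} and player costs C_i(s) = Σ_{r ∈ s_i} c_r(x_r(s)), the function Φ(s) = Σ_{r ∈ R} Σ_{k=1}^{x_r(s)} c_r(k) satisfies C_i(s'_i, s_{-i}) − C_i(s_i, s_{-i}) = Φ(s'_i, s_{-i}) − Φ(s_i, s_{-i}) for every player i, every profile s, and every allowable strategy s'_i of player i. -/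
open Finset

lemma card_filter_update_aux {ι : Type} [Fintype ι] [DecidableEq ι]
    {R : Type} [DecidableEq R]
    (t : ι → Finset R) (i : ι) (r : R) :
    (Finset.filter (fun j => r ∈ t j) Finset.univ).card =
      (Finset.filter (fun j => r ∈ t j) (Finset.univ.erase i)).card
        + (if r ∈ t i then 1 else 0) := by
  rw [← Finset.insert_erase (Finset.mem_univ i), Finset.filter_insert]
  split
  · rw [Finset.card_insert_of_notMem (by simp [Finset.mem_filter])]
    simp
  · simp

/-- Rosenthal's Theorem: every congestion game is an exact potential game, with
Rosenthal's potential Φ(s) = Σ_{r ∈ R} Σ_{k=1}^{x_r(s)} c_r(k), where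
x_r(s) is the number of players using resource r and player i's cost is
C_i(s) = Σ_{r ∈ s_i} c_r(x_r(s)). -/
theorem rosenthal_congestion_potential
    {ι : Type} [Fintype ι] [Nonempty ι] [DecidableEq ι]
    {R : Type} [Fintype R] [DecidableEq R]
    (S : ι → Set (Finset R)) (hS : ∀ i, (S i).Nonempty)
    (c : R → ℕ → ℝ)
    (s : ι → Finset R) (hs : ∀ j, s j ∈ S j)
    (i : ι) (s' : Finset R) (hs' : s' ∈ S i) :
    (∑ r ∈ s',
        c r (Finset.filter (fun j => r ∈ Function.update s i s' j) Finset.univ).card)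
      - (∑ r ∈ s i,
          c r (Finset.filter (fun j => r ∈ s j) Finset.univ).card)
    = (∑ r : R, ∑ k ∈ Finset.range
          (Finset.filter (fun j => r ∈ Function.update s i s' j) Finset.univ).card,
          c r (k + 1))
      - (∑ r : R, ∑ k ∈ Finset.range
          (Finset.filter (fun j => r ∈ s j) Finset.univ).card,
          c r (k + 1)) := by
  set n : R → ℕ := fun r => (Finset.filter (fun j => r ∈ s j) (Finset.univ.erase i)).card with hn
  have herase : ∀ r, Finset.filter (fun j => r ∈ Function.update s i s' j) (Finset.univ.erase i)
      = Finset.filter (fun j => r ∈ s j) (Finset.univ.erase i) := by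
    intro r
    apply Finset.filter_congr
    intro j hj
    rw [Function.update_of_ne (Finset.mem_erase.mp hj).1]
  have hY : ∀ r, (Finset.filter (fun j => r ∈ Function.update s i s' j) Finset.univ).card
      = n r + (if r ∈ s' then 1 else 0) := by
    intro r
    rw [card_filter_update_aux (Function.update s i s') i r, herase r]
    simp [hn]
  have hX : ∀ r, (Finset.filter (fun j => r ∈ s j) Finset.univ).card
      = n r + (if r ∈ s i then 1 else 0) := by
    intro r
    rw [card_filter_update_aux s i r]
  have key : ∀ r : R,
      (∑ k ∈ Finset.range ((Finset.filter (fun j => r ∈ Function.update s i s' j) Finset.univ).card), c r (k+1))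
        - (∑ k ∈ Finset.range ((Finset.filter (fun j => r ∈ s j) Finset.univ).card), c r (k+1))
      = (if r ∈ s' then c r (n r + 1) else 0) - (if r ∈ s i then c r (n r + 1) else 0) := by
    intro r
    rw [hY r, hX r]
    split_ifs with h1 h2 <;> simp_all [Finset.sum_range_succ]
  rw [← Finset.sum_sub_distrib]
  rw [Finset.sum_congr rfl (fun r _ => key r), Finset.sum_sub_distrib]
  congr 1
  · rw [Finset.sum_ite_mem, Finset.univ_inter]
    apply Finset.sum_congr rfl
    intro r hr
    rw [hY r, if_pos hr]
  · rw [Finset.sum_ite_mem, Finset.univ_inter]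
    apply Finset.sum_congr rfl
    intro r hr
    rw [hX r, if_pos hr]
end

section
/- Von Neumann Minimax Theorem (saddle point form): for every real m × n matrix A (m, n ≥ 1) there exist mixed strategies x* in the simplex Δ_m and y* in the simplex Δ_n such that for all x ∈ Δ_m and all y ∈ Δ_n, xᵀ A y* ≤ x*ᵀ A y* ≤ x*ᵀ A y; consequently max_{x ∈ Δ_m} min_{y ∈ Δ_n} xᵀ A y = min_{y ∈ Δ_n} max_{x ∈ Δ_m} xᵀ A y. -/
/-!
Let `g x = min_j (xᵀA)_j` be the payoff the row strategy `x` guarantees, and let `xs` maximize the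
continuous function `g` on the compact simplex. Some column strategy `ys` keeps every row payoff
`(A ys)_i` at most `g xs`: otherwise the compact convex set `A(Δ_n)` misses the orthant below the
constant vector `g xs`, and a separating hyperplane, whose normal is forced into the nonnegative
orthant and can be normalized into `Δ_m`, is a strategy guaranteeing more than `g xs`. Then
`(xs, ys)` is a saddle point with value `g xs`, and a saddle point makes `sup inf = inf sup`.
-/

open Finset Matrix Set

section StdSimplex

variable {ι κ : Type*} [Fintype ι] [Fintype κ]

theorem dotProduct_const_of_mem_stdSimplex {x : ι → ℝ} (hx : x ∈ stdSimplex ℝ ι) (c : ℝ) :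
    x ⬝ᵥ (fun _ => c) = c := by
  simp only [dotProduct, ← sum_mul, hx.2, one_mul]

theorem dotProduct_le_of_mem_stdSimplex {x z : ι → ℝ} (hx : x ∈ stdSimplex ℝ ι) {c : ℝ}
    (hz : ∀ i, z i ≤ c) : x ⬝ᵥ z ≤ c :=
  dotProduct_const_of_mem_stdSimplex hx c ▸ dotProduct_le_dotProduct_of_nonneg_left hz hx.1

theorem le_dotProduct_of_mem_stdSimplex {x z : ι → ℝ} (hx : x ∈ stdSimplex ℝ ι) {c : ℝ}
    (hz : ∀ i, c ≤ z i) : c ≤ x ⬝ᵥ z :=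
  dotProduct_const_of_mem_stdSimplex hx c ▸ dotProduct_le_dotProduct_of_nonneg_left hz hx.1

theorem inv_sum_smul_mem_stdSimplex {φ : ι → ℝ} (hφ : 0 ≤ φ) (hsum : 0 < ∑ i, φ i) :
    (∑ i, φ i)⁻¹ • φ ∈ stdSimplex ℝ ι :=
  ⟨fun i => mul_nonneg (inv_nonneg.2 hsum.le) (hφ i), by
    simp only [Pi.smul_apply, smul_eq_mul, ← mul_sum, inv_mul_cancel₀ hsum.ne']⟩

theorem exists_mem_stdSimplex_dotProduct_lt_of_disjoint_Iic {K : Set (ι → ℝ)} (hKc : Convex ℝ K)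
    (hKk : IsCompact K) (hKne : K.Nonempty) {a : ι → ℝ} (hK : Disjoint (Iic a) K) :
    ∃ x ∈ stdSimplex ℝ ι, ∀ z ∈ K, x ⬝ᵥ a < x ⬝ᵥ z := by
  classical
  obtain ⟨f, u, v, hfa, huv, hfK⟩ :=
    geometric_hahn_banach_closed_compact (convex_Iic a) isClosed_Iic hKc hKk hK
  set φ : ι → ℝ := fun i => f fun j => if i = j then 1 else 0
  have hf : ∀ z, f z = φ ⬝ᵥ z := fun z => by
    simpa [dotProduct, mul_comm] using LinearMap.pi_apply_eq_sum_univ (f : (ι → ℝ) →ₗ[ℝ] ℝ) z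
  -- `f` is bounded above on the cone `a + Iic 0`, hence nonpositive on `Iic 0`.
  have hf_nonpos : ∀ w ≤ (0 : ι → ℝ), f w ≤ 0 := by
    intro w hw
    by_contra! hfw
    have hfa_u : f a < u := hfa a self_mem_Iic
    have := hfa (a + ((u - f a) / f w) • w)
      (add_le_of_nonpos_right (smul_nonpos_of_nonneg_of_nonpos (by positivity) hw))
    rw [map_add, map_smul, smul_eq_mul, div_mul_cancel₀ _ hfw.ne'] at this
    linarith
  have hφ : 0 ≤ φ := fun i => by
    simpa [φ] using hf_nonpos (-fun j => if i = j then 1 else 0)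
      fun j => by by_cases h : i = j <;> simp [h]
  have hφK : ∀ z ∈ K, φ ⬝ᵥ a < φ ⬝ᵥ z := fun z hz => by
    rw [← hf, ← hf]; linarith [hfa a self_mem_Iic, hfK z hz]
  obtain ⟨z₀, hz₀⟩ := hKne
  have hsum : 0 < ∑ i, φ i := by
    refine (sum_nonneg fun i _ => hφ i).lt_of_ne fun h => ?_
    have hφ0 : φ = 0 :=
      funext fun i => (sum_eq_zero_iff_of_nonneg fun i _ => hφ i).1 h.symm i (mem_univ i)
    simpa [hφ0] using hφK z₀ hz₀
  refine ⟨_, inv_sum_smul_mem_stdSimplex hφ hsum, fun z hz => ?_⟩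
  simp only [smul_dotProduct, smul_eq_mul]
  exact mul_lt_mul_of_pos_left (hφK z hz) (inv_pos.2 hsum)

theorem Matrix.exists_saddlePoint [Nonempty ι] [Nonempty κ] (A : Matrix ι κ ℝ) :
    ∃ xs ∈ stdSimplex ℝ ι, ∃ ys ∈ stdSimplex ℝ κ, ∀ x ∈ stdSimplex ℝ ι, ∀ y ∈ stdSimplex ℝ κ,
      x ⬝ᵥ A *ᵥ ys ≤ xs ⬝ᵥ A *ᵥ ys ∧ xs ⬝ᵥ A *ᵥ ys ≤ xs ⬝ᵥ A *ᵥ y := by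
  classical
  set g : (ι → ℝ) → ℝ := fun x => univ.inf' univ_nonempty (x ᵥ* A)
  have hg : Continuous g := Continuous.finset_inf'_apply univ_nonempty fun j _ => by fun_prop
  have hg_le : ∀ x, ∀ y ∈ stdSimplex ℝ κ, g x ≤ x ⬝ᵥ A *ᵥ y := fun x y hy => by
    rw [dotProduct_mulVec, dotProduct_comm]
    exact le_dotProduct_of_mem_stdSimplex hy fun j => inf'_le _ (mem_univ j)
  obtain ⟨xs, hxs, hxs_max⟩ := (isCompact_stdSimplex ℝ ι).exists_isMaxOn
    (Set.nonempty_coe_sort.1 inferInstance) hg.continuousOn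
  obtain ⟨ys, hys, hAys⟩ : ∃ ys ∈ stdSimplex ℝ κ, ∀ i, (A *ᵥ ys) i ≤ g xs := by
    by_contra! h
    have hdisj : Disjoint (Iic fun _ => g xs) (A.mulVecLin '' stdSimplex ℝ κ) := by
      refine disjoint_left.2 ?_
      rintro _ hz ⟨y, hy, rfl⟩
      obtain ⟨i, hi⟩ := h y hy
      exact (hz i).not_gt hi
    obtain ⟨x, hx, hlt⟩ := exists_mem_stdSimplex_dotProduct_lt_of_disjoint_Iic
      ((convex_stdSimplex ℝ κ).linear_image A.mulVecLin)
      ((isCompact_stdSimplex ℝ κ).image A.mulVecLin.continuous_of_finiteDimensional)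
      ((Set.nonempty_coe_sort.1 inferInstance).image _) hdisj
    have hgx : g xs < g x := (lt_inf'_iff _).2 fun j _ => by
      have := hlt _ ⟨Pi.single j 1, single_mem_stdSimplex ℝ j, rfl⟩
      rwa [dotProduct_const_of_mem_stdSimplex hx, mulVecLin_apply, dotProduct_mulVec,
        dotProduct_single_one] at this
    exact (hxs_max hx).not_gt hgx
  have hval : xs ⬝ᵥ A *ᵥ ys = g xs :=
    le_antisymm (dotProduct_le_of_mem_stdSimplex hxs hAys) (hg_le xs ys hys)
  exact ⟨xs, hxs, ys, hys, fun x hx y hy =>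
    ⟨hval ▸ dotProduct_le_of_mem_stdSimplex hx hAys, hval ▸ hg_le xs y hy⟩⟩

end StdSimplex

theorem ciSup_ciInf_eq_ciInf_ciSup_of_saddlePoint {α β γ : Type*} [ConditionallyCompleteLattice γ]
    {F : α → β → γ} {a : α} {b : β} (hbelow : ∀ x, BddBelow (range (F x)))
    (habove : ∀ y, BddAbove (range fun x => F x y))
    (hsaddle : ∀ x y, F x b ≤ F a b ∧ F a b ≤ F a y) :
    ⨆ x, ⨅ y, F x y = ⨅ y, ⨆ x, F x y := by
  have : Nonempty α := ⟨a⟩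
  have : Nonempty β := ⟨b⟩
  have hinf : ∀ x, ⨅ y, F x y ≤ F a b := fun x => (ciInf_le (hbelow x) b).trans (hsaddle x b).1
  have hsup : ∀ y, F a b ≤ ⨆ x, F x y := fun y => le_ciSup_of_le (habove y) a (hsaddle a y).2
  refine le_antisymm ((ciSup_le hinf).trans (le_ciInf hsup)) ?_
  calc ⨅ y, ⨆ x, F x y ≤ ⨆ x, F x b := ciInf_le ⟨F a b, forall_mem_range.2 hsup⟩ b
    _ ≤ F a b := ciSup_le fun x => (hsaddle x b).1
    _ ≤ ⨅ y, F a y := le_ciInf fun y => (hsaddle a y).2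
    _ ≤ ⨆ x, ⨅ y, F x y := le_ciSup ⟨F a b, forall_mem_range.2 hinf⟩ a

theorem Matrix.dotProduct_mulVec_eq_sum_sum {ι κ R : Type*} [Fintype ι] [Fintype κ] [CommSemiring R]
    (x : ι → R) (A : Matrix ι κ R) (y : κ → R) :
    x ⬝ᵥ A *ᵥ y = ∑ i, ∑ j, x i * A i j * y j := by
  simp only [dotProduct, mulVec, mul_sum, mul_assoc]

/-- Von Neumann Minimax Theorem (saddle point form): for every real m × n
matrix A (m, n ≥ 1) there exist mixed strategies x* ∈ Δ_m and y* ∈ Δ_n such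
that xᵀ A y* ≤ x*ᵀ A y* ≤ x*ᵀ A y for all x ∈ Δ_m, y ∈ Δ_n; consequently
sup_{x ∈ Δ_m} inf_{y ∈ Δ_n} xᵀ A y = inf_{y ∈ Δ_n} sup_{x ∈ Δ_m} xᵀ A y. -/
theorem von_neumann_minimax {m n : ℕ} (hm : 1 ≤ m) (hn : 1 ≤ n)
    (A : Matrix (Fin m) (Fin n) ℝ) :
    (∃ xs ∈ stdSimplex ℝ (Fin m), ∃ ys ∈ stdSimplex ℝ (Fin n),
      ∀ x ∈ stdSimplex ℝ (Fin m), ∀ y ∈ stdSimplex ℝ (Fin n),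
        (∑ i, ∑ j, x i * A i j * ys j) ≤ (∑ i, ∑ j, xs i * A i j * ys j) ∧
        (∑ i, ∑ j, xs i * A i j * ys j) ≤ ∑ i, ∑ j, xs i * A i j * y j) ∧
    (⨆ x : stdSimplex ℝ (Fin m), ⨅ y : stdSimplex ℝ (Fin n),
        ∑ i, ∑ j, (x : Fin m → ℝ) i * A i j * (y : Fin n → ℝ) j)
      = ⨅ y : stdSimplex ℝ (Fin n), ⨆ x : stdSimplex ℝ (Fin m),
          ∑ i, ∑ j, (x : Fin m → ℝ) i * A i j * (y : Fin n → ℝ) j := by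
  have : Nonempty (Fin m) := ⟨⟨0, hm⟩⟩
  have : Nonempty (Fin n) := ⟨⟨0, hn⟩⟩
  have := isCompact_iff_compactSpace.1 (isCompact_stdSimplex ℝ (Fin m))
  have := isCompact_iff_compactSpace.1 (isCompact_stdSimplex ℝ (Fin n))
  simp only [← dotProduct_mulVec_eq_sum_sum]
  obtain ⟨xs, hxs, ys, hys, hsaddle⟩ := A.exists_saddlePoint
  refine ⟨⟨xs, hxs, ys, hys, hsaddle⟩, ?_⟩
  exact ciSup_ciInf_eq_ciInf_ciSup_of_saddlePoint (a := ⟨xs, hxs⟩) (b := ⟨ys, hys⟩)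
    (fun x => (isCompact_range (by fun_prop)).bddBelow)
    (fun y => (isCompact_range (by fun_prop)).bddAbove)
    (fun x y => hsaddle x x.2 y y.2)
end

section
/- Folk Theorem of Evolutionary Game Theory, part (4): every interior rest point of the replicator dynamics is a Nash equilibrium. That is, if p̂ ∈ Δ satisfies p̂_i > 0 for all i and p̂_i ((A p̂)_i − p̂ · A p̂) = 0 for all i (equivalently (A p̂)_1 = (A p̂)_2 = … = (A p̂)_n), then p̂ · A p̂ ≥ p · A p̂ for all p ∈ Δ. -/
/-- Folk Theorem of Evolutionary Game Theory, part (4): every interior rest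
point of the replicator dynamics is a Nash equilibrium. -/
theorem interior_rest_point_is_nash {n : ℕ} (A : Matrix (Fin n) (Fin n) ℝ)
    (p : Fin n → ℝ) (hp : p ∈ stdSimplex ℝ (Fin n))
    (hpos : ∀ i, 0 < p i)
    (hrest : ∀ i, p i * ((∑ j, A i j * p j) - ∑ k, ∑ j, p k * A k j * p j) = 0) :
    ∀ q ∈ stdSimplex ℝ (Fin n),
      (∑ i, ∑ j, q i * A i j * p j) ≤ ∑ i, ∑ j, p i * A i j * p j := by
  intro q hq
  set c : ℝ := ∑ k, ∑ j, p k * A k j * p j with hc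
  have hAp : ∀ i, (∑ j, A i j * p j) = c := by
    intro i
    have h := hrest i
    have hne := (hpos i).ne'
    have := mul_eq_zero.mp h
    rcases this with h1 | h2
    · exact absurd h1 hne
    · linarith [sub_eq_zero.mp h2]
  have h1 : (∑ i, ∑ j, q i * A i j * p j) = ∑ i, q i * c := by
    apply Finset.sum_congr rfl
    intro i _
    rw [← hAp i, Finset.mul_sum]
    apply Finset.sum_congr rfl
    intro j _; ring
  have h2 : c = ∑ i, p i * c := by
    apply Finset.sum_congr rfl
    intro i _
    rw [← hAp i, Finset.mul_sum]
    apply Finset.sum_congr rfl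
    intro j _; ring
  rw [h1, h2, ← Finset.sum_mul, ← Finset.sum_mul, hq.2, hp.2]; ring_nf; exact le_rfl
end

section
/- Folk Theorem of Evolutionary Game Theory, part (5): let x : [0, ∞) → Δ be a solution of the replicator dynamics (each coordinate x_i is differentiable with x_i'(t) = x_i(t)((A x(t))_i − x(t) · A x(t))) with x(t) in the interior of Δ for all t ≥ 0, and suppose x(t) → p̂ as t → ∞ for some p̂ ∈ Δ. Then p̂ is a Nash equilibrium of the evolution matrix game with payoff matrix A. -/
/-!
If `p̂` were not a Nash equilibrium, some pure strategy `i` would earn strictly more than the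
average against `p̂`. By continuity the same holds, with a margin `ε > 0`, along the orbit from
some time `T` on, so `ẋᵢ ≥ ε xᵢ` there and the positive coordinate `xᵢ` grows at least like
`e^{εt}`. This contradicts `xᵢ(t) → p̂ᵢ`.
-/

open Set Filter Topology Real

theorem exists_lt_of_lt_sum_mul_of_mem_stdSimplex {ι : Type*} [Fintype ι] {q v : ι → ℝ} {c : ℝ}
    (hq : q ∈ stdSimplex ℝ ι) (h : c < ∑ i, q i * v i) : ∃ i, c < v i := by
  by_contra! hle
  have : ∑ i, q i * v i ≤ ∑ i, q i * c :=
    Finset.sum_le_sum fun i _ => mul_le_mul_of_nonneg_left (hle i) (hq.1 i)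
  rw [← Finset.sum_mul, hq.2, one_mul] at this
  linarith

section Growth

variable {f r : ℝ → ℝ} {ε T : ℝ}

theorem monotoneOn_mul_exp_neg_of_hasDerivWithinAt
    (hf : ∀ t ∈ Ici T, HasDerivWithinAt f (f t * r t) (Ici T) t)
    (hpos : ∀ t ∈ Ici T, 0 ≤ f t) (hr : ∀ t ∈ Ici T, ε ≤ r t) :
    MonotoneOn (fun t => f t * exp (-(ε * t))) (Ici T) := by
  have hg : ∀ t ∈ Ici T, HasDerivWithinAt (fun t => f t * exp (-(ε * t)))
      (f t * exp (-(ε * t)) * (r t - ε)) (Ici T) t := by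
    intro t ht
    have hexp : HasDerivAt (fun t => exp (-(ε * t))) (exp (-(ε * t)) * -ε) t := by
      simpa using ((hasDerivAt_id t).const_mul ε).neg.exp
    exact ((hf t ht).mul hexp.hasDerivWithinAt).congr_deriv (by ring)
  refine monotoneOn_of_hasDerivWithinAt_nonneg (f' := fun t => f t * exp (-(ε * t)) * (r t - ε))
    (convex_Ici T) (fun t ht => (hg t ht).continuousWithinAt) (fun t ht => ?_) (fun t ht => ?_)
  · rw [interior_Ici] at ht ⊢
    exact (hg t (Ioi_subset_Ici_self ht)).mono Ioi_subset_Ici_self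
  · replace ht : t ∈ Ici T := interior_subset ht
    exact mul_nonneg (mul_nonneg (hpos t ht) (exp_pos _).le) (sub_nonneg.2 (hr t ht))

theorem tendsto_atTop_of_hasDerivWithinAt_mul_of_le (hε : 0 < ε)
    (hf : ∀ t ∈ Ici T, HasDerivWithinAt f (f t * r t) (Ici T) t)
    (hpos : ∀ t ∈ Ici T, 0 < f t) (hr : ∀ t ∈ Ici T, ε ≤ r t) :
    Tendsto f atTop atTop := by
  set c := f T * exp (-(ε * T))
  have hmono := monotoneOn_mul_exp_neg_of_hasDerivWithinAt hf (fun t ht => (hpos t ht).le) hr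
  have hlower : ∀ t ∈ Ici T, c * exp (ε * t) ≤ f t := by
    intro t ht
    have := hmono self_mem_Ici ht ht
    rwa [← le_div_iff₀ (exp_pos _), div_eq_mul_inv, ← exp_neg]
  have hc : 0 < c := mul_pos (hpos T self_mem_Ici) (exp_pos _)
  refine tendsto_atTop_mono' _ ?_
    ((tendsto_exp_atTop.comp (tendsto_id.const_mul_atTop hε)).const_mul_atTop hc)
  filter_upwards [eventually_ge_atTop T] with t ht using hlower t ht

end Growth

theorem limit_of_interior_orbit_is_nash_general {n : ℕ} (A : Matrix (Fin n) (Fin n) ℝ)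
    (x : ℝ → Fin n → ℝ)
    (hint : ∀ t ∈ Set.Ici (0:ℝ), ∀ i, 0 < x t i)
    (hderiv : ∀ (i : Fin n), ∀ t ∈ Set.Ici (0:ℝ),
      HasDerivWithinAt (fun τ => x τ i)
        (x t i * ((∑ j, A i j * x t j) - ∑ k, ∑ j, x t k * A k j * x t j))
        (Set.Ici (0:ℝ)) t)
    (p : Fin n → ℝ)
    (hlim : Filter.Tendsto x Filter.atTop (nhds p)) :
    ∀ q ∈ stdSimplex ℝ (Fin n),
      (∑ i, ∑ j, q i * A i j * p j) ≤ ∑ i, ∑ j, p i * A i j * p j := by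
  intro q hq
  by_contra! hlt
  simp only [mul_assoc, ← Finset.mul_sum] at hlt
  obtain ⟨i, hi⟩ := exists_lt_of_lt_sum_mul_of_mem_stdSimplex hq hlt
  set excess : (Fin n → ℝ) → ℝ := fun y => (∑ j, A i j * y j) - ∑ k, ∑ j, y k * A k j * y j
  have hexcess : 0 < excess p := by
    simp only [excess, mul_assoc, ← Finset.mul_sum]
    linarith
  have hev : ∀ᶠ t in atTop, excess p / 2 ≤ excess (x t) ∧ 0 ≤ t :=
    ((((by fun_prop : Continuous excess).tendsto p).comp hlim).eventually
      (eventually_ge_nhds (half_lt_self hexcess))).and (eventually_ge_atTop 0)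
  obtain ⟨T, hT⟩ := eventually_atTop.1 hev
  have hT0 : Ici T ⊆ Ici 0 := Ici_subset_Ici.2 (hT T le_rfl).2
  have hgrow : Tendsto (fun t => x t i) atTop atTop :=
    tendsto_atTop_of_hasDerivWithinAt_mul_of_le (half_pos hexcess)
      (fun t ht => (hderiv i t (hT0 ht)).mono hT0) (fun t ht => hint t (hT0 ht) i)
      (fun t ht => (hT t ht).1)
  exact not_tendsto_nhds_of_tendsto_atTop hgrow _ (((continuous_apply i).tendsto p).comp hlim)

/-- Folk Theorem of Evolutionary Game Theory, part (5): if x : [0, ∞) → Δ is a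
solution of the replicator dynamics lying in the interior of Δ for all t ≥ 0
and x(t) → p̂ as t → ∞ for some p̂ ∈ Δ, then p̂ is a Nash equilibrium of the
evolution matrix game with payoff matrix A. -/
theorem limit_of_interior_orbit_is_nash {n : ℕ} (A : Matrix (Fin n) (Fin n) ℝ)
    (x : ℝ → Fin n → ℝ)
    (hmem : ∀ t ∈ Set.Ici (0:ℝ), x t ∈ stdSimplex ℝ (Fin n))
    (hint : ∀ t ∈ Set.Ici (0:ℝ), ∀ i, 0 < x t i)
    (hderiv : ∀ (i : Fin n), ∀ t ∈ Set.Ici (0:ℝ),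
      HasDerivWithinAt (fun τ => x τ i)
        (x t i * ((∑ j, A i j * x t j) - ∑ k, ∑ j, x t k * A k j * x t j))
        (Set.Ici (0:ℝ)) t)
    (p : Fin n → ℝ) (hpΔ : p ∈ stdSimplex ℝ (Fin n))
    (hlim : Filter.Tendsto x Filter.atTop (nhds p)) :
    ∀ q ∈ stdSimplex ℝ (Fin n),
      (∑ i, ∑ j, q i * A i j * p j) ≤ ∑ i, ∑ j, p i * A i j * p j :=
  limit_of_interior_orbit_is_nash_general A x hint hderiv p hlim
end

section
/- Fundamental increase of mean fitness along replicator trajectories: let A be a symmetric n × n real matrix and let x : ℝ → Δ be a solution of the replicator dynamics (each x_i differentiable with x_i'(t) = x_i(t)((A x(t))_i − x(t) · A x(t))). Then the average payoff ū(t) = x(t) · A x(t) is differentiable and satisfies ū'(t) = 2 Σ_{i=1}^n x_i(t) ((A x(t))_i − ū(t))² ≥ 0; in particular the mean average payoff is nondecreasing along every trajectory. -/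
/-!
Write `u = A x` and `ū = x · A x`. For symmetric `A` the derivative of `x · A x` is `2 ẋ · A x`,
and along the replicator field `ẋᵢ = xᵢ (uᵢ - ū)` this is `2 Σ xᵢ (uᵢ - ū) uᵢ`. Since `Σ xᵢ = 1`,
subtracting `ū Σ xᵢ (uᵢ - ū) = 0` turns it into `2 Σ xᵢ (uᵢ - ū)²`, the variance of the payoffs
under `x`, which is nonnegative.
-/

open Finset

section

variable {ι : Type*} [Fintype ι]

theorem sum_sum_mul_mul_eq_sum_mul_sum (A : Matrix ι ι ℝ) (p : ι → ℝ) :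
    ∑ k, ∑ j, p k * A k j * p j = ∑ k, p k * ∑ j, A k j * p j := by
  simp only [mul_sum, mul_assoc]

theorem hasDerivAt_sum_sum_mul_mul {A : Matrix ι ι ℝ} (hA : ∀ i j, A i j = A j i)
    {x : ℝ → ι → ℝ} {v : ι → ℝ} {t : ℝ} (hx : ∀ i, HasDerivAt (fun τ => x τ i) (v i) t) :
    HasDerivAt (fun τ => ∑ k, ∑ j, x τ k * A k j * x τ j)
      (2 * ∑ i, v i * ∑ j, A i j * x t j) t := by
  have hprod : HasDerivAt (fun τ => ∑ k, ∑ j, x τ k * A k j * x τ j)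
      (∑ k, ∑ j, (v k * A k j * x t j + x t k * A k j * v j)) t :=
    HasDerivAt.fun_sum fun k _ => HasDerivAt.fun_sum fun j _ =>
      ((hx k).mul_const (A k j)).mul (hx j)
  convert hprod using 1
  rw [two_mul]
  simp only [sum_add_distrib, mul_sum]
  congr 1
  · exact sum_congr rfl fun k _ => sum_congr rfl fun j _ => by ring
  · rw [sum_comm]
    exact sum_congr rfl fun j _ => sum_congr rfl fun k _ => by rw [hA k j]; ring

theorem sum_mul_sub_mean_mul_eq_sum_mul_sub_mean_sq {p : ι → ℝ}
    (hp : ∑ i, p i = 1) (u : ι → ℝ) :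
    ∑ i, p i * (u i - ∑ k, p k * u k) * u i = ∑ i, p i * (u i - ∑ k, p k * u k) ^ 2 := by
  set m := ∑ k, p k * u k
  have hcentered : ∑ i, p i * (u i - m) = 0 := by
    simp only [mul_sub, sum_sub_distrib, ← sum_mul, hp, one_mul, m, sub_self]
  calc ∑ i, p i * (u i - m) * u i
      = ∑ i, (p i * (u i - m) ^ 2 + m * (p i * (u i - m))) :=
        sum_congr rfl fun i _ => by ring
    _ = ∑ i, p i * (u i - m) ^ 2 := by
        rw [sum_add_distrib, ← mul_sum, hcentered, mul_zero, add_zero]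

end

/-- Increase of mean fitness along replicator trajectories: for a symmetric
payoff matrix A and a solution x of the replicator dynamics with values in Δ,
the average payoff ū(t) = x(t) · A x(t) is differentiable with
ū'(t) = 2 Σ_i x_i(t)((A x(t))_i − ū(t))² ≥ 0, hence nondecreasing. -/
theorem mean_fitness_increases {n : ℕ} (A : Matrix (Fin n) (Fin n) ℝ)
    (hsymm : ∀ i j, A i j = A j i)
    (x : ℝ → Fin n → ℝ)
    (hmem : ∀ t, x t ∈ stdSimplex ℝ (Fin n))
    (hderiv : ∀ (i : Fin n) (t : ℝ),
      HasDerivAt (fun τ => x τ i)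
        (x t i * ((∑ j, A i j * x t j) - ∑ k, ∑ j, x t k * A k j * x t j)) t) :
    (∀ t : ℝ,
      HasDerivAt (fun τ => ∑ k, ∑ j, x τ k * A k j * x τ j)
        (2 * ∑ i, x t i *
          ((∑ j, A i j * x t j) - ∑ k, ∑ j, x t k * A k j * x t j) ^ 2) t ∧
      0 ≤ 2 * ∑ i, x t i *
          ((∑ j, A i j * x t j) - ∑ k, ∑ j, x t k * A k j * x t j) ^ 2) ∧
    Monotone (fun t => ∑ k, ∑ j, x t k * A k j * x t j) := by
  refine ⟨?pointwise, monotone_of_hasDerivAt_nonneg (fun t => (?pointwise t).1)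
    fun t => (?pointwise t).2⟩
  intro t
  have hvar := sum_mul_sub_mean_mul_eq_sum_mul_sub_mean_sq (hmem t).2 fun i => ∑ j, A i j * x t j
  simp only [← sum_sum_mul_mul_eq_sum_mul_sum] at hvar
  refine ⟨hvar ▸ hasDerivAt_sum_sum_mul_mul hsymm fun i => hderiv i t, ?_⟩
  exact mul_nonneg zero_le_two (sum_nonneg fun i _ => mul_nonneg ((hmem t).1 i) (sq_nonneg _))
end

section
/- A strictly dominated pure strategy is never used in a mixed Nash equilibrium: in a finite strategic game, if player i's pure strategy α ∈ S i is strictly dominated by β ∈ S i (that is, u i (β, s_{-i}) > u i (α, s_{-i}) for every choice s_{-i} of the other players' pure strategies), then every mixed Nash equilibrium σ* assigns probability zero to α: σ*_i(α) = 0. -/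
section aux

variable {ι : Type} [Fintype ι] [DecidableEq ι]
  (S : ι → Type) [∀ i, Fintype (S i)] (i : ι)

/-- Split a sum over profiles weighted by a product of per-coordinate weights. -/
lemma sum_profile_split (g : ∀ j, S j → ℝ) (F : (∀ j, S j) → ℝ) :
    ∑ s : ∀ k, S k, (∏ k, g k (s k)) * F s
      = ∑ a : S i, g i a *
          ∑ t : ∀ j : {j // j ≠ i}, S j,
            (∏ j : {j // j ≠ i}, g (j : ι) (t j)) * F ((Equiv.piSplitAt i S).symm (a, t)) := by
  rw [← Equiv.sum_comp (Equiv.piSplitAt i S).symm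
      (fun s => (∏ k, g k (s k)) * F s), Fintype.sum_prod_type]
  refine Finset.sum_congr rfl fun a _ => ?_
  rw [Finset.mul_sum]
  refine Finset.sum_congr rfl fun t _ => ?_
  rw [← mul_assoc]
  congr 1
  rw [← Finset.mul_prod_erase Finset.univ
      (fun k => g k (((Equiv.piSplitAt i S).symm (a, t)) k)) (Finset.mem_univ i)]
  congr 1
  · simp [Equiv.piSplitAt_symm_apply]
  · rw [Finset.prod_subtype (p := fun j => j ≠ i) (Finset.univ.erase i) (fun x => by simp)
      (fun k => g k (((Equiv.piSplitAt i S).symm (a, t)) k))]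
    exact Finset.prod_congr rfl fun j _ => by
      simp [Equiv.piSplitAt_symm_apply, j.2]

lemma update_piSplitAt (a b : S i) (t : ∀ j : {j // j ≠ i}, S j) :
    Function.update ((Equiv.piSplitAt i S).symm (a, t)) i b
      = (Equiv.piSplitAt i S).symm (b, t) := by
  funext j
  by_cases h : j = i
  · subst h; simp [Equiv.piSplitAt_symm_apply]
  · simp [Function.update_of_ne h, Equiv.piSplitAt_symm_apply, h]

end aux

/-- A strictly dominated pure strategy is never used in a mixed Nash
equilibrium: if player i's pure strategy α is strictly dominated by β (i.e.
u i (β, s_{-i}) > u i (α, s_{-i}) for every choice of the other players'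
strategies), then every mixed Nash equilibrium assigns probability 0 to α. -/
theorem dominated_strategy_unused
    {ι : Type} [Fintype ι] [Nonempty ι] [DecidableEq ι]
    (S : ι → Type) [∀ i, Fintype (S i)] [∀ i, Nonempty (S i)]
    (u : ι → (∀ j, S j) → ℝ)
    (i : ι) (α β : S i)
    (hdom : ∀ s : ∀ j, S j,
      u i (Function.update s i α) < u i (Function.update s i β))
    (σ : ∀ j, S j → ℝ)
    (hσ0 : ∀ j a, 0 ≤ σ j a) (hσ1 : ∀ j, ∑ a, σ j a = 1)
    (hNE : ∀ (j : ι) (τ : S j → ℝ), (∀ a, 0 ≤ τ a) → (∑ a, τ a = 1) →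
      (∑ s : ∀ k, S k, (∏ k, Function.update σ j τ k (s k)) * u j s)
        ≤ ∑ s : ∀ k, S k, (∏ k, σ k (s k)) * u j s) :
    σ i α = 0 := by
  classical
  have hαβ : α ≠ β := by
    intro h
    have := hdom (Classical.arbitrary _)
    rw [h] at this
    exact lt_irrefl _ this
  set Q : (∀ j : {j // j ≠ i}, S (j : ι)) → ℝ :=
    fun t => ∏ j : {j // j ≠ i}, σ (j : ι) (t j) with hQ
  set v : S i → (∀ j : {j // j ≠ i}, S (j : ι)) → ℝ :=
    fun a t => u i ((Equiv.piSplitAt i S).symm (a, t)) with hv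
  set c : S i → ℝ := fun a => ∑ t, Q t * v a t with hc
  -- nonnegativity and total mass of Q
  have hQ0 : ∀ t, 0 ≤ Q t := fun t =>
    Finset.prod_nonneg fun j _ => hσ0 _ _
  have hQ1 : ∑ t, Q t = 1 := by
    rw [hQ, ← Fintype.prod_sum]
    simp [hσ1]
  -- dominance in coordinates
  have hvlt : ∀ t, v α t < v β t := by
    intro t
    have h := hdom ((Equiv.piSplitAt i S).symm (α, t))
    rwa [update_piSplitAt, update_piSplitAt] at h
  -- payoff formula
  have hpay : ∀ ρ : S i → ℝ,
      (∑ s : ∀ k, S k, (∏ k, Function.update σ i ρ k (s k)) * u i s)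
        = ∑ a, ρ a * c a := by
    intro ρ
    rw [sum_profile_split S i (Function.update σ i ρ) (u i)]
    refine Finset.sum_congr rfl fun a _ => ?_
    rw [Function.update_self]
    congr 1
    refine Finset.sum_congr rfl fun t _ => ?_
    congr 1
    exact Finset.prod_congr rfl fun j _ => by rw [Function.update_of_ne j.2]
  have hpayσ : (∑ s : ∀ k, S k, (∏ k, σ k (s k)) * u i s) = ∑ a, σ i a * c a := by
    rw [← hpay (σ i)]
    refine Finset.sum_congr rfl fun s _ => by rw [Function.update_eq_self]
  -- the deviating strategy
  set τ : S i → ℝ := fun a =>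
    σ i a + σ i α * ((if a = β then 1 else 0) - (if a = α then 1 else 0)) with hτ
  have hτ0 : ∀ a, 0 ≤ τ a := by
    intro a
    rcases eq_or_ne a α with rfl | ha
    · simp [hτ, hαβ]
    · rcases eq_or_ne a β with rfl | hb
      · simp [hτ, Ne.symm hαβ]
        linarith [hσ0 i α, hσ0 i a]
      · simp [hτ, ha, hb, hσ0 i a]
  have hτ1 : ∑ a, τ a = 1 := by
    rw [hτ]
    rw [Finset.sum_add_distrib, hσ1, ← Finset.mul_sum, Finset.sum_sub_distrib]
    simp
  -- NE inequality gives σ i α * (c β - c α) ≤ 0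
  have hineq := hNE i τ hτ0 hτ1
  rw [hpay τ, hpayσ] at hineq
  have hsum : ∑ a, τ a * c a = (∑ a, σ i a * c a) + σ i α * (c β - c α) := by
    rw [hτ]
    simp only [add_mul, mul_assoc, sub_mul, ite_mul, one_mul, zero_mul]
    rw [Finset.sum_add_distrib, ← Finset.mul_sum, Finset.sum_sub_distrib,
      Finset.sum_ite_eq' Finset.univ β c, Finset.sum_ite_eq' Finset.univ α c]
    simp
  rw [hsum] at hineq
  have hkey : σ i α * (c β - c α) ≤ 0 := by linarith
  -- c β - c α > 0
  have hpos : 0 < c β - c α := by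
    have : c β - c α = ∑ t, Q t * (v β t - v α t) := by
      rw [hc]
      rw [← Finset.sum_sub_distrib]
      exact Finset.sum_congr rfl fun t _ => by ring
    rw [this]
    have hex : ∃ t, Q t ≠ 0 := by
      by_contra h
      push_neg at h
      rw [Finset.sum_congr rfl fun t _ => h t] at hQ1
      simp at hQ1
    obtain ⟨t0, ht0⟩ := hex
    refine Finset.sum_pos' (fun t _ => mul_nonneg (hQ0 t) (by linarith [hvlt t])) ?_
    exact ⟨t0, Finset.mem_univ t0,
      mul_pos (lt_of_le_of_ne (hQ0 t0) (Ne.symm ht0)) (by linarith [hvlt t0])⟩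
  have h1 : σ i α ≤ 0 := by nlinarith
  linarith [hσ0 i α]
end
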